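/- arXiv:1504.03586 — 6 statements merged into one kernel-verified Lean document; each statement's English description precedes it below -/
import Mathlib

section
/- The function α ↦ (2 - 2/α)/(2 - 2^{1/α}) is strictly increasing on [2, ∞), and hence for all α ≥ 2 it is at least 1/(2 - √2). -/
open Real

noncomputable def haux (x : ℝ) : ℝ := (2 - 2 ^ x) / (1 - x)

noncomputable def phiaux (x : ℝ) : ℝ := 2 - 2 ^ x - Real.log 2 * ((2:ℝ) ^ x * (1 - x))

lemma twopow_hasDerivAt (x : ℝ) :
    HasDerivAt (fun y : ℝ => (2:ℝ) ^ y) ((2:ℝ) ^ x * Real.log 2) x :=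
  (Real.hasStrictDerivAt_const_rpow (by norm_num) x).hasDerivAt

lemma twopow_cont : Continuous (fun y : ℝ => (2:ℝ) ^ y) := by
  have : (fun y : ℝ => (2:ℝ) ^ y) = fun y => Real.exp (Real.log 2 * y) := by
    funext y
    rw [Real.rpow_def_of_pos (by norm_num), mul_comm]
  rw [this]
  exact Real.continuous_exp.comp (continuous_const.mul continuous_id)

lemma phiaux_hasDerivAt (x : ℝ) :
    HasDerivAt phiaux (-(Real.log 2 ^ 2 * ((2:ℝ) ^ x * (1 - x)))) x := by
  have h1 := twopow_hasDerivAt x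
  have h3 : HasDerivAt (fun y : ℝ => 1 - y) (-1 : ℝ) x := by
    simpa using (hasDerivAt_const x (1:ℝ)).fun_sub (hasDerivAt_id x)
  have h4 : HasDerivAt (fun y : ℝ => (2:ℝ) ^ y * (1 - y))
      ((2:ℝ) ^ x * Real.log 2 * (1 - x) + (2:ℝ) ^ x * (-1)) x := h1.mul h3
  have h5 := ((hasDerivAt_const x (2:ℝ)).fun_sub h1).fun_sub (h4.const_mul (Real.log 2))
  refine h5.congr_deriv ?_
  ring

lemma phiaux_pos {x : ℝ} (hx : x ∈ Set.Icc (0:ℝ) (1/2)) : 0 < phiaux x := by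
  have hanti : AntitoneOn phiaux (Set.Icc (0:ℝ) (1/2)) := by
    apply antitoneOn_of_deriv_nonpos (convex_Icc 0 (1/2))
    · exact fun y _ => (phiaux_hasDerivAt y).continuousAt.continuousWithinAt
    · intro y hy
      exact (phiaux_hasDerivAt y).differentiableAt.differentiableWithinAt
    · intro y hy
      rw [interior_Icc] at hy
      rw [(phiaux_hasDerivAt y).deriv]
      have h1 : (0:ℝ) < (2:ℝ) ^ y := Real.rpow_pos_of_pos (by norm_num) y
      have h2 : (0:ℝ) < 1 - y := by linarith [hy.2]
      have := mul_nonneg (sq_nonneg (Real.log 2)) (mul_pos h1 h2).le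
      linarith
  have key : phiaux (1/2) ≤ phiaux x :=
    hanti hx (by constructor <;> norm_num) hx.2
  have hval : phiaux (1/2) = 2 - Real.sqrt 2 - Real.log 2 * (Real.sqrt 2 * (1/2)) := by
    unfold phiaux
    rw [← Real.sqrt_eq_rpow]
    norm_num
  have hs : Real.sqrt 2 ^ 2 = 2 := Real.sq_sqrt (by norm_num)
  have hs0 : (0:ℝ) ≤ Real.sqrt 2 := Real.sqrt_nonneg 2
  have hlog : Real.log 2 < 0.6931471808 := Real.log_two_lt_d9
  have hlog0 : (0:ℝ) < Real.log 2 := Real.log_pos (by norm_num)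
  have : (0:ℝ) < phiaux (1/2) := by
    rw [hval]
    nlinarith [hs, hs0, hlog, hlog0]
  linarith

lemma haux_hasDerivAt {x : ℝ} (hx : x ≠ 1) :
    HasDerivAt haux (phiaux x / (1 - x) ^ 2) x := by
  have h1 := twopow_hasDerivAt x
  have h2 : HasDerivAt (fun y : ℝ => 2 - (2:ℝ) ^ y) (-((2:ℝ) ^ x * Real.log 2)) x := by
    simpa using (hasDerivAt_const x (2:ℝ)).fun_sub h1
  have h3 : HasDerivAt (fun y : ℝ => 1 - y) (-1 : ℝ) x := by
    simpa using (hasDerivAt_const x (1:ℝ)).fun_sub (hasDerivAt_id x)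
  have hne : (1:ℝ) - x ≠ 0 := sub_ne_zero.mpr (Ne.symm hx)
  have h4 := h2.fun_div h3 hne
  refine h4.congr_deriv ?_
  unfold phiaux
  field_simp
  ring

lemma haux_strictMono : StrictMonoOn haux (Set.Icc (0:ℝ) (1/2)) := by
  apply strictMonoOn_of_deriv_pos (convex_Icc 0 (1/2))
  · apply ContinuousOn.div
    · exact (continuous_const.sub twopow_cont).continuousOn
    · exact (continuous_const.sub continuous_id).continuousOn
    · intro y hy
      have : y < 1 := lt_of_le_of_lt hy.2 (by norm_num)
      exact sub_ne_zero.mpr (by linarith)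
  · intro y hy
    rw [interior_Icc] at hy
    have hy1 : y ≠ 1 := by intro h; rw [h] at hy; norm_num at hy
    rw [(haux_hasDerivAt hy1).deriv]
    have h1 : 0 < phiaux y := phiaux_pos ⟨hy.1.le, hy.2.le⟩
    have h2 : (0:ℝ) < (1 - y) ^ 2 :=
      pow_pos (show (0:ℝ) < 1 - y by linarith [hy.2]) 2
    positivity

lemma haux_pos {t : ℝ} (ht0 : 0 < t) (ht : t ≤ 1/2) : 0 < haux t := by
  unfold haux
  apply div_pos
  · have : (2:ℝ) ^ t < (2:ℝ) ^ (1:ℝ) :=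
      Real.rpow_lt_rpow_of_exponent_lt (by norm_num) (by linarith)
    rw [Real.rpow_one] at this
    linarith
  · linarith

lemma f_eq {α : ℝ} (hα : 2 ≤ α) :
    (2 - 2/α) / (2 - 2 ^ (1/α)) = 2 / haux (1/α) := by
  have hα0 : α ≠ 0 := by linarith
  unfold haux
  rw [div_div_eq_mul_div]
  congr 1
  field_simp

lemma mem_aux {α : ℝ} (hα : 2 ≤ α) : (1/α) ∈ Set.Icc (0:ℝ) (1/2) := by
  have h0 : (0:ℝ) < α := by linarith
  constructor
  · positivity
  · rw [div_le_div_iff₀ h0 (by norm_num)]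
    linarith

theorem stmt10 :
    StrictMonoOn (fun α : ℝ => (2 - 2/α) / (2 - 2 ^ (1/α))) (Set.Ici (2:ℝ)) ∧
    ∀ α : ℝ, 2 ≤ α → 1 / (2 - Real.sqrt 2) ≤ (2 - 2/α) / (2 - 2 ^ (1/α)) := by
  have key : StrictMonoOn (fun α : ℝ => (2 - 2/α) / (2 - 2 ^ (1/α))) (Set.Ici (2:ℝ)) := by
    intro a ha b hb hab
    simp only [Set.mem_Ici] at ha hb
    have ha0 : (0:ℝ) < a := by linarith
    have hb0 : (0:ℝ) < b := by linarith
    have hma := mem_aux ha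
    have hmb := mem_aux hb
    have hlt : 1/b < 1/a := by
      apply one_div_lt_one_div_of_lt ha0 hab
    have hmono : haux (1/b) < haux (1/a) := haux_strictMono hmb hma hlt
    have hpa : 0 < haux (1/a) := haux_pos (by positivity) hma.2
    have hpb : 0 < haux (1/b) := haux_pos (by positivity) hmb.2
    simp only
    rw [f_eq ha, f_eq hb]
    exact div_lt_div_of_pos_left (by norm_num) hpb hmono
  refine ⟨key, fun α hα => ?_⟩
  have h2 : (2 - 2/(2:ℝ)) / (2 - 2 ^ (1/(2:ℝ))) = 1 / (2 - Real.sqrt 2) := by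
    rw [← Real.sqrt_eq_rpow]
    norm_num
  rw [← h2]
  rcases eq_or_lt_of_le hα with h | h
  · rw [← h]
  · exact (key (Set.self_mem_Ici) (Set.mem_Ici.mpr hα) h).le
end

section
/- For all α ≥ 2, the function z(α) = (2 - √2)^{1-α}/α is strictly increasing, and z(α) ≥ (2 + 2^{1/α})/4. -/
open Real

-- basic facts about sqrt 2
private lemma hs2 : Real.sqrt 2 ^ 2 = 2 := Real.sq_sqrt (by norm_num)
private lemma hs2pos : (0:ℝ) < Real.sqrt 2 := Real.sqrt_pos.mpr (by norm_num)
private lemma hsqrt_lb : (1.414:ℝ) < Real.sqrt 2 := by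
  nlinarith [hs2, hs2pos]
private lemma hsqrt_ub : Real.sqrt 2 < 2 := by
  nlinarith [hs2, hs2pos]

private lemma hcpos : (0:ℝ) < 2 - Real.sqrt 2 := by linarith [hsqrt_ub]

-- key: log (2 - √2) ≤ -1/2
private lemma hlog : Real.log (2 - Real.sqrt 2) ≤ -(1/2) := by
  rw [Real.log_le_iff_le_exp hcpos]
  have hE : Real.exp (-(1/2)) * Real.exp (-(1/2)) = Real.exp (-1) := by
    rw [← Real.exp_add]; norm_num
  have hE1 : Real.exp (-1) = (Real.exp 1)⁻¹ := by
    rw [Real.exp_neg]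
  have he : Real.exp 1 < 2.7182818286 := Real.exp_one_lt_d9
  have hepos : (0:ℝ) < Real.exp 1 := Real.exp_pos 1
  have hEpos : (0:ℝ) < Real.exp (-(1/2)) := Real.exp_pos _
  -- (2 - √2)^2 = 6 - 4√2 < exp(-1) = (exp 1)⁻¹
  have hE2 : Real.exp (-(1/2:ℝ))^2 = (Real.exp 1)⁻¹ := by
    rw [sq, hE, hE1]
  have hsq : (2 - Real.sqrt 2)^2 < Real.exp (-(1/2))^2 := by
    rw [hE2]
    have hinv : (Real.exp 1)⁻¹ * Real.exp 1 = 1 := inv_mul_cancel₀ hepos.ne'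
    nlinarith [hs2, hsqrt_lb, hepos, he, hinv]
  nlinarith [hcpos, hEpos, hsq]

private lemma key_mono : ∀ a b : ℝ, 2 ≤ a → a < b →
    (2 - Real.sqrt 2) ^ (1 - a) / a < (2 - Real.sqrt 2) ^ (1 - b) / b := by
  intro a b ha hab
  have hapos : (0:ℝ) < a := by linarith
  have hbpos : (0:ℝ) < b := by linarith
  set L := Real.log (2 - Real.sqrt 2) with hL
  have hra : (2 - Real.sqrt 2) ^ (1 - a) = Real.exp ((1 - a) * L) := by
    rw [Real.rpow_def_of_pos hcpos, hL]; ring_nf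
  have hrb : (2 - Real.sqrt 2) ^ (1 - b) = Real.exp ((1 - b) * L) := by
    rw [Real.rpow_def_of_pos hcpos, hL]; ring_nf
  rw [hra, hrb, div_lt_div_iff₀ hapos hbpos]
  -- exp((1-a)L) * b < exp((1-b)L) * a
  have hquot : Real.exp ((1 - b) * L) = Real.exp ((1 - a) * L) * Real.exp ((b - a) * (-L)) := by
    rw [← Real.exp_add]; ring_nf
  rw [hquot]
  have hea : (0:ℝ) < Real.exp ((1 - a) * L) := Real.exp_pos _
  have h1 : (b - a) / 2 ≤ (b - a) * (-L) := by
    have : (1:ℝ)/2 ≤ -L := by linarith [hlog]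
    nlinarith
  have h2 : 1 + (b - a) / 2 < Real.exp ((b - a) * (-L)) := by
    calc 1 + (b - a)/2 < Real.exp ((b-a)/2) := by
          have := Real.add_one_lt_exp (x := (b-a)/2) (by linarith : (0:ℝ) < (b-a)/2).ne'
          linarith
      _ ≤ Real.exp ((b - a) * (-L)) := Real.exp_le_exp.mpr h1
  have h3 : b ≤ a * (1 + (b - a) / 2) := by nlinarith
  calc Real.exp ((1 - a) * L) * b ≤ Real.exp ((1 - a) * L) * (a * (1 + (b - a)/2)) := by
        apply mul_le_mul_of_nonneg_left h3 hea.le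
    _ < Real.exp ((1 - a) * L) * Real.exp ((b - a) * (-L)) * a := by
        have := mul_lt_mul_of_pos_left h2 (mul_pos hea hapos)
        nlinarith [mul_pos hea hapos, h2]

theorem stmt11 :
    StrictMonoOn (fun α : ℝ => (2 - Real.sqrt 2) ^ (1 - α) / α) (Set.Ici (2:ℝ)) ∧
    ∀ α : ℝ, 2 ≤ α → (2 + 2 ^ (1/α)) / 4 ≤ (2 - Real.sqrt 2) ^ (1 - α) / α := by
  constructor
  · intro a ha b hb hab
    exact key_mono a b ha hab
  · intro α hα
    have hαpos : (0:ℝ) < α := by linarith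
    -- step 1: 2^(1/α) ≤ √2
    have h1 : (2:ℝ) ^ (1/α) ≤ Real.sqrt 2 := by
      rw [Real.sqrt_eq_rpow]
      apply Real.rpow_le_rpow_of_exponent_le one_le_two
      rw [div_le_div_iff₀ hαpos (by norm_num)]
      linarith
    -- step 2: (2 + √2)/4 = value at 2
    have h2 : (2 + Real.sqrt 2) / 4 = (2 - Real.sqrt 2) ^ (1 - (2:ℝ)) / 2 := by
      rw [show (1 - (2:ℝ)) = -1 by norm_num, Real.rpow_neg_one]
      have hne := hcpos.ne'
      field_simp
      nlinarith [hs2]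
    have h3 : (2 - Real.sqrt 2) ^ (1 - (2:ℝ)) / 2 ≤ (2 - Real.sqrt 2) ^ (1 - α) / α := by
      rcases eq_or_lt_of_le hα with h | h
      · rw [← h]
      · exact (key_mono 2 α le_rfl h).le
    calc (2 + 2 ^ (1/α)) / 4 ≤ (2 + Real.sqrt 2) / 4 := by linarith
      _ = (2 - Real.sqrt 2) ^ (1 - (2:ℝ)) / 2 := h2
      _ ≤ _ := h3
end

section
/- For all α ≥ 2, (1/α)·((2 - 2/α)/(2 - 2^{1/α}))^{α-1} ≥ (2 + 2^{1/α})/4. -/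
set_option maxHeartbeats 1000000

open Real

theorem stmt12 (α : ℝ) (hα : 2 ≤ α) :
    (2 + 2 ^ (1/α)) / 4 ≤ (1/α) * ((2 - 2/α) / (2 - 2 ^ (1/α))) ^ (α - 1) := by
  have hα0 : (0:ℝ) < α := by linarith
  obtain ⟨x, hxdef⟩ : ∃ x : ℝ, x = 1/α := ⟨_, rfl⟩
  have hx0p : 0 < x := by rw [hxdef]; positivity
  have hx2 : x ≤ 1/2 := by
    rw [hxdef, div_le_div_iff₀ hα0 (by norm_num)]
    linarith
  obtain ⟨c, hcdef⟩ : ∃ c : ℝ, c = (2:ℝ) ^ x := ⟨_, rfl⟩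
  have hl : Real.log 2 > 0.6931471803 := Real.log_two_gt_d9
  have hl' : Real.log 2 < 0.6931471808 := Real.log_two_lt_d9
  -- c = exp (log 2 * x)
  have hc_exp : c = Real.exp (Real.log 2 * x) := by
    rw [hcdef]; exact Real.rpow_def_of_pos (by norm_num) x
  have hc1 : 1 < c := by
    rw [hc_exp]
    have : 0 < Real.log 2 * x := by positivity
    calc (1:ℝ) = Real.exp 0 := by simp
    _ < Real.exp (Real.log 2 * x) := Real.exp_lt_exp.mpr this
  obtain ⟨s, hsdef⟩ : ∃ s : ℝ, s = Real.exp (Real.log 2 * (1/2)) := ⟨_, rfl⟩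
  have hs0 : 0 < s := hsdef ▸ Real.exp_pos _
  have hs2 : s * s = 2 := by
    rw [hsdef, ← Real.exp_add]
    have : Real.log 2 * (1/2) + Real.log 2 * (1/2) = Real.log 2 := by ring
    rw [this, Real.exp_log]; norm_num
  have hslb : 1.414 < s := by nlinarith
  have hsub : 1.4143 > s := by nlinarith
  -- tangent line bound: c ≥ s * (1 + log 2 * (x - 1/2))
  have htan : s * (1 + Real.log 2 * (x - 1/2)) ≤ c := by
    rw [hc_exp]
    have h1 : Real.exp (Real.log 2 * x) = s * Real.exp (Real.log 2 * x - Real.log 2 * (1/2)) := by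
      rw [hsdef, ← Real.exp_add]; ring_nf
    rw [h1]
    have h2 : 1 + (Real.log 2 * x - Real.log 2 * (1/2)) ≤ Real.exp (Real.log 2 * x - Real.log 2 * (1/2)) := by
      have := Real.add_one_le_exp (Real.log 2 * x - Real.log 2 * (1/2)); linarith
    have : 1 + Real.log 2 * (x - 1/2) = 1 + (Real.log 2 * x - Real.log 2 * (1/2)) := by ring
    rw [this]
    exact mul_le_mul_of_nonneg_left h2 hs0.le
  have hc2 : c < 2 := by
    rw [hcdef]
    calc (2:ℝ) ^ x < 2 ^ (1:ℝ) := by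
          apply Real.rpow_lt_rpow_of_exponent_lt (by norm_num)
          linarith
    _ = 2 := Real.rpow_one 2
  -- key inequality
  have hA : 0 ≤ 2 * Real.log 2 ^ 2 - 8 * s * Real.log 2 + 8 := by nlinarith
  have hB : 0 ≤ 8 * s - 4 * Real.log 2 - 8 := by nlinarith
  have hd : 0 ≤ 1/2 - x := by linarith
  obtain ⟨L, hLdef⟩ : ∃ L : ℝ, L = s * (1 + Real.log 2 * (x - 1/2)) := ⟨_, rfl⟩
  rw [← hLdef] at htan
  have hgL : 0 ≤ L^2 + 4 * L - 4 - 8 * x * L + 8 * x^2 := by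
    rw [hLdef]
    nlinarith [mul_nonneg hd hB, mul_nonneg (mul_nonneg hd hd) hA, hs2]
  have hL0 : 0 ≤ L := by
    rw [hLdef]
    nlinarith [mul_nonneg hs0.le hd]
  have hprod : 0 ≤ (c - L) * (c + L + 4 - 8*x) := by
    apply mul_nonneg (by linarith)
    linarith
  have hkey : 0 ≤ c^2 + 4*c - 4 - 8*x*c + 8*x^2 := by
    have h9 : (c - L) * (c + L + 4 - 8*x) = c^2 - L^2 + 4*c - 4*L - 8*x*c + 8*x*L := by ring
    have h10 : 0 ≤ c^2 - L^2 + 4*c - 4*L - 8*x*c + 8*x*L := by rw [← h9]; exact hprod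
    linarith [h10, hgL]
  -- now finish
  have he : 0 < 2 - c := by linarith
  have h2x : 2/α = 2*x := by rw [hxdef]; ring
  obtain ⟨r, hrdef⟩ : ∃ r : ℝ, r = (2 - 2*x) / (2 - c) := ⟨_, rfl⟩
  have hr1 : 1 ≤ r := by
    rw [hrdef, le_div_iff₀ he]
    linarith
  have hb : 1 + (α - 1) * (r - 1) ≤ r ^ (α - 1) := by
    have := one_add_mul_self_le_rpow_one_add (by linarith : (-1:ℝ) ≤ r - 1) (by linarith : (1:ℝ) ≤ α - 1)
    have h3 : (1:ℝ) + (r - 1) = r := by ring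
    rw [h3] at this
    linarith
  have hxp : x * (α - 1) = 1 - x := by
    rw [hxdef]; field_simp
  have h6 : (2+c)/4 ≤ x + (1-x) * ((c - 2*x)/(2-c)) := by
    rw [← sub_nonneg]
    have heq : x + (1-x) * ((c - 2*x)/(2-c)) - (2+c)/4
        = (c^2 + 4*c - 4 - 8*x*c + 8*x^2) / (4*(2-c)) := by
      field_simp
      ring
    rw [heq]
    exact div_nonneg hkey (by linarith)
  have hrm : r - 1 = (c - 2*x)/(2-c) := by
    rw [hrdef]
    field_simp
    ring
  have hxa : x * α = 1 := by rw [hxdef]; field_simp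
  have h7 : x + (1-x) * ((c - 2*x)/(2-c)) = x * (1 + (α - 1) * (r - 1)) := by
    rw [hrm]
    linear_combination (-((c - 2*x)/(2-c))) * hxa
  have h8 : x * (1 + (α - 1) * (r - 1)) ≤ x * r ^ (α - 1) :=
    mul_le_mul_of_nonneg_left hb hx0p.le
  rw [h2x, ← hxdef, ← hcdef, ← hrdef]
  calc (2 + c)/4 ≤ x * (1 + (α - 1) * (r - 1)) := by rw [← h7]; exact h6
  _ ≤ x * r ^ (α - 1) := h8
end

section
/- For all α ≥ 2, (α/(α-1))·(2 - 2^{1/α}) > 1. -/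
open Real

theorem stmt14 (α : ℝ) (hα : 2 ≤ α) : 1 < (α / (α - 1)) * (2 - 2 ^ (1/α)) := by
  have hα0 : (0:ℝ) < α := by linarith
  have ht0 : 0 < 1/α := by positivity
  have ht1 : 1/α ≤ 1/2 := by
    apply one_div_le_one_div_of_le <;> linarith
  have hlog : (0:ℝ) ≠ Real.log 2 := by
    have := Real.log_pos (by norm_num : (1:ℝ) < 2)
    linarith
  have hconv := strictConvexOn_exp.2 (Set.mem_univ 0) (Set.mem_univ (Real.log 2))
    hlog (by linarith : (0:ℝ) < 1 - 1/α) ht0 (by ring)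
  simp only [smul_eq_mul, mul_zero, zero_add, Real.exp_zero,
    Real.exp_log (by norm_num : (0:ℝ) < 2)] at hconv
  have hrpow : (2:ℝ) ^ (1/α) = Real.exp (1/α * Real.log 2) := by
    rw [Real.rpow_def_of_pos (by norm_num : (0:ℝ) < 2)]; ring_nf
  have hkey : (2:ℝ) ^ (1/α) < 1 + 1/α := by
    rw [hrpow]; nlinarith [hconv]
  rw [div_mul_eq_mul_div, lt_div_iff₀ (by linarith : (0:ℝ) < α - 1)]
  have h1 : 1/α * α = 1 := by field_simp
  nlinarith [hkey]
end

section
/- For α > 1 and δ with 1 < δ < 2^{1/α}, let d₁ = δ((α-1)/2)^{1/α} and d₂ = d₁ + (α-1)^{1/α}. Then the function h₁(x) = x + x^{1-α} + (d₂ - x)^{1-α} - d₂^{1-α} is strictly convex on (0, d₂), its derivative is negative at x = ((α-1)/2)^{1/α} and positive at x = δ((α-1)/2)^{1/α}; hence h₁ has a unique minimizer of the form δ'((α-1)/2)^{1/α} with 1 < δ' < δ. -/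
open Real

theorem stmt17 (α δ : ℝ) (hα : 1 < α) (hδ1 : 1 < δ) (hδ2 : δ < 2 ^ (1/α)) :
    let d₂ : ℝ := δ * ((α - 1)/2) ^ (1/α) + (α - 1) ^ (1/α)
    let h₁ : ℝ → ℝ := fun x => x + x ^ (1 - α) + (d₂ - x) ^ (1 - α) - d₂ ^ (1 - α)
    StrictConvexOn ℝ (Set.Ioo 0 d₂) h₁ ∧
    deriv h₁ (((α - 1)/2) ^ (1/α)) < 0 ∧
    0 < deriv h₁ (δ * ((α - 1)/2) ^ (1/α)) ∧
    ∃! δ' : ℝ, 1 < δ' ∧ δ' < δ ∧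
      ∀ x ∈ Set.Ioo (0:ℝ) d₂, x ≠ δ' * ((α - 1)/2) ^ (1/α) →
        h₁ (δ' * ((α - 1)/2) ^ (1/α)) < h₁ x := by
  intro d₂ h₁
  have hα0 : (0:ℝ) < α := by linarith
  have hα1 : (0:ℝ) < α - 1 := by linarith
  have hαne : α ≠ 0 := ne_of_gt hα0
  set c : ℝ := ((α - 1)/2) ^ (1/α) with hc
  set a : ℝ := (α - 1) ^ (1/α) with ha
  have hc0 : 0 < c := Real.rpow_pos_of_pos (by linarith) _
  have ha0 : 0 < a := Real.rpow_pos_of_pos hα1 _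
  have hd₂ : d₂ = δ * c + a := rfl
  have hδ0 : (0:ℝ) < δ := by linarith
  have hcδc : c < δ * c := by nlinarith
  have hδcd : δ * c < d₂ := by rw [hd₂]; linarith
  have hcd : c < d₂ := lt_trans hcδc hδcd
  have hd₂0 : 0 < d₂ := lt_trans hc0 hcd
  -- powers
  have hcα : c ^ α = (α - 1)/2 := by
    rw [hc, ← Real.rpow_mul (by linarith), one_div_mul_cancel hαne, Real.rpow_one]
  have haα : a ^ α = α - 1 := by
    rw [ha, ← Real.rpow_mul (by linarith), one_div_mul_cancel hαne, Real.rpow_one]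
  -- derivative
  set F : ℝ → ℝ := fun x => 1 + (1 - α) * x ^ (-α) - (1 - α) * (d₂ - x) ^ (-α) with hFdef
  have hF : ∀ x ∈ Set.Ioo (0:ℝ) d₂, HasDerivAt h₁ (F x) x := by
    intro x hx
    have hx0 : (0:ℝ) < x := hx.1
    have hxd : x < d₂ := hx.2
    have h1 : HasDerivAt (fun y : ℝ => y ^ (1 - α)) ((1 - α) * x ^ (1 - α - 1)) x :=
      Real.hasDerivAt_rpow_const (Or.inl hx0.ne')
    have h2 : HasDerivAt (fun y : ℝ => (d₂ - y) ^ (1 - α))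
        ((-1) * (1 - α) * (d₂ - x) ^ (1 - α - 1)) x :=
      ((hasDerivAt_id x).const_sub d₂).rpow_const
        (Or.inl (by simp only [id_eq]; exact ne_of_gt (by linarith)))
    have h3 := (((hasDerivAt_id x).add h1).add h2).sub_const (d₂ ^ (1 - α))
    have he : (1:ℝ) - α - 1 = -α := by ring
    rw [he] at h1 h2 h3
    refine h3.congr_deriv ?_
    rw [hFdef]; ring
  -- second derivative
  set G : ℝ → ℝ := fun x => (1 - α) * ((-α) * x ^ (-α - 1))
      - (1 - α) * ((-1) * (-α) * (d₂ - x) ^ (-α - 1)) with hGdef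
  have hF' : ∀ x ∈ Set.Ioo (0:ℝ) d₂, HasDerivAt F (G x) x := by
    intro x hx
    have hx0 : (0:ℝ) < x := hx.1
    have hxd : x < d₂ := hx.2
    have h1 : HasDerivAt (fun y : ℝ => y ^ (-α)) ((-α) * x ^ (-α - 1)) x :=
      Real.hasDerivAt_rpow_const (Or.inl hx0.ne')
    have h2 : HasDerivAt (fun y : ℝ => (d₂ - y) ^ (-α))
        ((-1) * (-α) * (d₂ - x) ^ (-α - 1)) x :=
      ((hasDerivAt_id x).const_sub d₂).rpow_const
        (Or.inl (by simp only [id_eq]; exact ne_of_gt (by linarith)))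
    have h3 := ((hasDerivAt_const x (1:ℝ)).add (h1.const_mul (1 - α))).sub
      (h2.const_mul (1 - α))
    refine h3.congr_deriv ?_
    rw [hGdef]; ring
  have hG : ∀ x ∈ Set.Ioo (0:ℝ) d₂, 0 < G x := by
    intro x hx
    have hx0 : (0:ℝ) < x := hx.1
    have hxd : (0:ℝ) < d₂ - x := by linarith [hx.2]
    have p1 : (0:ℝ) < x ^ (-α - 1) := Real.rpow_pos_of_pos hx0 _
    have p2 : (0:ℝ) < (d₂ - x) ^ (-α - 1) := Real.rpow_pos_of_pos hxd _
    simp only [hGdef]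
    have : (1 - α) * ((-α) * x ^ (-α - 1)) - (1 - α) * ((-1) * (-α) * (d₂ - x) ^ (-α - 1))
        = α * (α - 1) * x ^ (-α - 1) + α * (α - 1) * (d₂ - x) ^ (-α - 1) := by ring
    rw [this]
    positivity
  have hcont : ContinuousOn h₁ (Set.Ioo 0 d₂) :=
    fun x hx => ((hF x hx).continuousAt).continuousWithinAt
  have hcontF : ContinuousOn F (Set.Ioo 0 d₂) :=
    fun x hx => ((hF' x hx).continuousAt).continuousWithinAt
  -- strict convexity
  have hconv : StrictConvexOn ℝ (Set.Ioo 0 d₂) h₁ := by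
    apply strictConvexOn_of_deriv2_pos (convex_Ioo 0 d₂) hcont
    intro x hx
    rw [interior_Ioo] at hx
    have hev : deriv h₁ =ᶠ[nhds x] F := by
      filter_upwards [Ioo_mem_nhds hx.1 hx.2] with y hy using (hF y hy).deriv
    have : deriv^[2] h₁ x = deriv F x := by
      simp only [Function.iterate_succ, Function.iterate_zero, Function.comp,
        Function.id_def]
      exact hev.deriv_eq
    rw [this, (hF' x hx).deriv]
    exact hG x hx
  -- deriv values
  have hcmem : c ∈ Set.Ioo (0:ℝ) d₂ := ⟨hc0, hcd⟩
  have hδcmem : δ * c ∈ Set.Ioo (0:ℝ) d₂ := ⟨by positivity, hδcd⟩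
  have hFc : F c < 0 := by
    have h1 : c ^ (-α) = ((α - 1)/2)⁻¹ := by
      rw [Real.rpow_neg hc0.le, hcα]
    have hw : a < d₂ - c := by rw [hd₂]; nlinarith
    have hwα : α - 1 < (d₂ - c) ^ α := by
      calc α - 1 = a ^ α := haα.symm
      _ < (d₂ - c) ^ α := Real.rpow_lt_rpow ha0.le hw hα0
    have hw0 : (0:ℝ) < d₂ - c := by linarith
    have hwp : (0:ℝ) < (d₂ - c) ^ α := Real.rpow_pos_of_pos hw0 _
    have h2 : (d₂ - c) ^ (-α) = ((d₂ - c) ^ α)⁻¹ := Real.rpow_neg hw0.le _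
    rw [hFdef]
    simp only [h1, h2]
    have key : (α - 1) * ((d₂ - c) ^ α)⁻¹ < 1 := by
      rw [mul_inv_lt_iff₀ hwp]; linarith
    have h3 : (1 - α) * ((α - 1)/2)⁻¹ = -2 := by
      field_simp
      ring
    rw [h3]
    have : (1 - α) * ((d₂ - c) ^ α)⁻¹ = -((α - 1) * ((d₂ - c) ^ α)⁻¹) := by ring
    rw [this]
    linarith
  have hFδc : 0 < F (δ * c) := by
    have hδcα : (δ * c) ^ α = δ ^ α * ((α - 1)/2) := by
      rw [Real.mul_rpow hδ0.le hc0.le, hcα]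
    have hδα : (1:ℝ) < δ ^ α := by
      calc (1:ℝ) = 1 ^ α := (Real.one_rpow α).symm
      _ < δ ^ α := Real.rpow_lt_rpow (by norm_num) hδ1 hα0
    have hδαp : (0:ℝ) < δ ^ α := by linarith
    have h1 : (δ * c) ^ (-α) = (δ ^ α * ((α - 1)/2))⁻¹ := by
      rw [Real.rpow_neg (by positivity), hδcα]
    have h2 : d₂ - δ * c = a := by rw [hd₂]; ring
    have h3 : (d₂ - δ * c) ^ (-α) = (α - 1)⁻¹ := by
      rw [h2, Real.rpow_neg ha0.le, haα]
    rw [hFdef]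
    simp only [h1, h3]
    have h4 : (1 - α) * (α - 1)⁻¹ = -1 := by field_simp; ring
    have h5 : (1 - α) * (δ ^ α * ((α - 1)/2))⁻¹ = -(2 * (δ ^ α)⁻¹) := by
      field_simp
      ring
    rw [h4, h5]
    have : (δ ^ α)⁻¹ < 1 := by
      rw [inv_lt_one_iff₀]; right; exact hδα
    have hp : (0:ℝ) < (δ ^ α)⁻¹ := by positivity
    linarith
  have hdc : deriv h₁ c = F c := (hF c hcmem).deriv
  have hdδc : deriv h₁ (δ * c) = F (δ * c) := (hF (δ * c) hδcmem).deriv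
  -- strict monotonicity of F
  have hFmono : StrictMonoOn F (Set.Ioo 0 d₂) := by
    apply strictMonoOn_of_deriv_pos (convex_Ioo 0 d₂) hcontF
    intro x hx
    rw [interior_Ioo] at hx
    rw [(hF' x hx).deriv]
    exact hG x hx
  -- root of F between c and δc
  have hIcc : Set.Icc c (δ * c) ⊆ Set.Ioo 0 d₂ := fun y hy =>
    ⟨lt_of_lt_of_le hc0 hy.1, lt_of_le_of_lt hy.2 hδcd⟩
  obtain ⟨t, htmem, hFt⟩ : ∃ t ∈ Set.Ioo c (δ * c), F t = 0 := by
    have := intermediate_value_Ioo hcδc.le (hcontF.mono hIcc)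
    have h0 : (0:ℝ) ∈ Set.Ioo (F c) (F (δ * c)) := ⟨hFc, hFδc⟩
    obtain ⟨t, ht, hFt⟩ := this h0
    exact ⟨t, ht, hFt⟩
  have htIoo : t ∈ Set.Ioo (0:ℝ) d₂ := hIcc ⟨htmem.1.le, htmem.2.le⟩
  -- t is a strict global minimum
  have hmin : ∀ x ∈ Set.Ioo (0:ℝ) d₂, x ≠ t → h₁ t < h₁ x := by
    intro x hx hne
    rcases lt_or_gt_of_ne hne with hlt | hgt
    · have hsub : Set.Icc x t ⊆ Set.Ioo 0 d₂ := fun y hy =>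
        ⟨lt_of_lt_of_le hx.1 hy.1, lt_of_le_of_lt hy.2 htIoo.2⟩
      have hanti : StrictAntiOn h₁ (Set.Icc x t) := by
        apply strictAntiOn_of_deriv_neg (convex_Icc x t) (hcont.mono hsub)
        intro y hy
        rw [interior_Icc] at hy
        have hymem : y ∈ Set.Ioo (0:ℝ) d₂ := hsub ⟨hy.1.le, hy.2.le⟩
        rw [(hF y hymem).deriv]
        have := hFmono hymem htIoo hy.2
        linarith [hFt ▸ this]
      exact hanti (Set.left_mem_Icc.2 hlt.le) (Set.right_mem_Icc.2 hlt.le) hlt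
    · have hsub : Set.Icc t x ⊆ Set.Ioo 0 d₂ := fun y hy =>
        ⟨lt_of_lt_of_le htIoo.1 hy.1, lt_of_le_of_lt hy.2 hx.2⟩
      have hmono : StrictMonoOn h₁ (Set.Icc t x) := by
        apply strictMonoOn_of_deriv_pos (convex_Icc t x) (hcont.mono hsub)
        intro y hy
        rw [interior_Icc] at hy
        have hymem : y ∈ Set.Ioo (0:ℝ) d₂ := hsub ⟨hy.1.le, hy.2.le⟩
        rw [(hF y hymem).deriv]
        have := hFmono htIoo hymem hy.1
        linarith [hFt ▸ this]
      exact hmono (Set.left_mem_Icc.2 hgt.le) (Set.right_mem_Icc.2 hgt.le) hgt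
  refine ⟨hconv, by rw [hdc]; exact hFc, by rw [hdδc]; exact hFδc, ?_⟩
  refine ⟨t / c, ⟨(one_lt_div hc0).2 htmem.1, (div_lt_iff₀ hc0).2 htmem.2, ?_⟩, ?_⟩
  · intro x hx hne
    rw [div_mul_cancel₀ t hc0.ne'] at hne ⊢
    exact hmin x hx hne
  · rintro δ'' ⟨h1'', h2'', h3''⟩
    have hu : δ'' * c ∈ Set.Ioo (0:ℝ) d₂ := by
      constructor
      · positivity
      · have : δ'' * c < δ * c := by nlinarith
        linarith
    by_contra hne
    have hut : δ'' * c ≠ t := by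
      intro h
      apply hne
      field_simp [hc0.ne'] at h ⊢
      linarith [h]
    have h1 := hmin (δ'' * c) hu hut
    have h2 := h3'' t htIoo (by exact fun h => hut h.symm)
    linarith
end

section
/- Let α > 1, n ≥ 1, and let s₀ > 0 and nonnegative reals s_k, s'_k and lengths t_k > 0 for k = 1,...,n satisfy: s'_k ≤ s_k ≤ s₀ whenever s'_k ≠ s_k, and Σ_k t_k (s_k - s'_k) = w. Then Σ_k t_k (s_k^α - s'_k^α) ≤ α s₀^{α-1} w. -/
open Real

lemma aux18 (α a b s₀ : ℝ) (hα : 1 < α) (hs₀ : 0 < s₀) (hb : 0 ≤ b)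
    (hba : b ≤ a) (has : a ≤ s₀) :
    a ^ α - b ^ α ≤ α * s₀ ^ (α - 1) * (a - b) := by
  have ha0 : 0 ≤ a := hb.trans hba
  rcases eq_or_lt_of_le ha0 with h | ha
  · have hb0 : b = 0 := le_antisymm (hba.trans h.symm.le) hb
    rw [← h, hb0]
    simp [Real.zero_rpow (by positivity : α ≠ 0)]
  · -- Bernoulli: 1 + α * s ≤ (1+s)^α with s = -(a-b)/a
    have hs1 : (-1 : ℝ) ≤ -((a - b) / a) := by
      rw [neg_le_neg_iff, div_le_one ha]
      linarith
    have hber := one_add_mul_self_le_rpow_one_add hs1 hα.le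
    have h1 : 1 + -((a - b) / a) = b / a := by field_simp; ring
    rw [h1] at hber
    have hpow : (b / a) ^ α = b ^ α / a ^ α := Real.div_rpow hb ha0 α
    rw [hpow] at hber
    have haα : 0 < a ^ α := Real.rpow_pos_of_pos ha α
    have hber2 : a ^ α * (1 + α * -((a - b) / a)) ≤ b ^ α := by
      rw [← le_div_iff₀' haα]; exact hber
    have hexp : a ^ α * ((a - b) / a) = a ^ (α - 1) * (a - b) := by
      rw [Real.rpow_sub ha, Real.rpow_one]
      field_simp
    have key : a ^ α - b ^ α ≤ α * a ^ (α - 1) * (a - b) := by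
      have : a ^ α - α * (a ^ α * ((a - b) / a)) ≤ b ^ α := by
        nlinarith [hber2]
      rw [hexp] at this
      linarith
    refine key.trans ?_
    have hmono : a ^ (α - 1) ≤ s₀ ^ (α - 1) :=
      Real.rpow_le_rpow ha0 has (by linarith)
    have : 0 ≤ a - b := by linarith
    have := mul_le_mul_of_nonneg_left (mul_le_mul_of_nonneg_right hmono this)
      (by linarith : (0:ℝ) ≤ α)
    linarith [this]

theorem stmt18 (α : ℝ) (hα : 1 < α) (n : ℕ) (hn : 1 ≤ n)
    (s₀ w : ℝ) (hs₀ : 0 < s₀)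
    (s s' t : Fin n → ℝ)
    (hs : ∀ k, 0 ≤ s k) (hs' : ∀ k, 0 ≤ s' k) (ht : ∀ k, 0 < t k)
    (hord : ∀ k, s' k ≠ s k → s' k ≤ s k ∧ s k ≤ s₀)
    (hw : ∑ k, t k * (s k - s' k) = w) :
    ∑ k, t k * ((s k) ^ α - (s' k) ^ α) ≤ α * s₀ ^ (α - 1) * w := by
  have hpt : ∀ k, t k * ((s k) ^ α - (s' k) ^ α)
      ≤ α * s₀ ^ (α - 1) * (t k * (s k - s' k)) := by
    intro k
    rcases eq_or_ne (s' k) (s k) with h | h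
    · simp [h]
    · obtain ⟨h1, h2⟩ := hord k h
      have := aux18 α (s k) (s' k) s₀ hα hs₀ (hs' k) h1 h2
      have htk := (ht k).le
      calc t k * ((s k) ^ α - (s' k) ^ α)
          ≤ t k * (α * s₀ ^ (α - 1) * (s k - s' k)) :=
            mul_le_mul_of_nonneg_left this htk
        _ = α * s₀ ^ (α - 1) * (t k * (s k - s' k)) := by ring
  calc ∑ k, t k * ((s k) ^ α - (s' k) ^ α)
      ≤ ∑ k, α * s₀ ^ (α - 1) * (t k * (s k - s' k)) :=
        Finset.sum_le_sum fun k _ => hpt k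
    _ = α * s₀ ^ (α - 1) * ∑ k, t k * (s k - s' k) := by
        rw [Finset.mul_sum]
    _ = α * s₀ ^ (α - 1) * w := by rw [hw]
end
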